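/- Let G = (S, C, R) be a reaction network with a set of intermediate species Y ⊆ S and let G* be the reduction of G by removal of Y. Then G has no drainable siphons if and only if G* has no drainable siphons, and G has no self-replicable siphons if and only if G* has no self-replicable siphons. -/

import Mathlib

/-- A reaction network: a finite set of species, a finite set of complexes
(nonnegative vectors supported on the species), and a finite set of reactions
(a digraph on the complexes with no self-loops), such that every complex takes
part in some reaction and every species is part of some complex. -/
structure RN (ι : Type) where
  species : Finset ι
  complexes : Finset (ι → ℝ)
  reactions : Finset ((ι → ℝ) × (ι → ℝ))
  complexes_nonneg : ∀ y ∈ complexes, ∀ i, 0 ≤ y i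
  complexes_supp : ∀ y ∈ complexes, ∀ i, y i ≠ 0 → i ∈ species
  react_mem_fst : ∀ r ∈ reactions, r.1 ∈ complexes
  react_mem_snd : ∀ r ∈ reactions, r.2 ∈ complexes
  no_loops : ∀ r ∈ reactions, r.1 ≠ r.2
  complexes_used : ∀ y ∈ complexes, ∃ r ∈ reactions, r.1 = y ∨ r.2 = y
  species_used : ∀ i ∈ species, ∃ y ∈ complexes, y i ≠ 0

namespace RN

variable {ι : Type}

/-- A siphon: a nonempty set of species such that every reaction having a
product species in it also has a reactant species in it. -/
def IsSiphon (G : RN ι) (T : Set ι) : Prop :=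
  T.Nonempty ∧ T ⊆ ↑G.species ∧
    ∀ r ∈ G.reactions, (∃ i ∈ T, 0 < r.2 i) → ∃ i ∈ T, 0 < r.1 i

/-- A minimal siphon: a siphon not properly containing any other siphon. -/
def MinimalSiphon (G : RN ι) (T : Set ι) : Prop :=
  G.IsSiphon T ∧ ∀ T' : Set ι, G.IsSiphon T' → T' ⊆ T → T' = T

/-- A nonempty set of species is drainable if some finite sequence of reactions
(with repetitions allowed) strictly decreases every one of its coordinates. -/
def Drainable (G : RN ι) (T : Set ι) : Prop :=
  T.Nonempty ∧ T ⊆ ↑G.species ∧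
    ∃ L : List ((ι → ℝ) × (ι → ℝ)), (∀ r ∈ L, r ∈ G.reactions) ∧
      ∀ i ∈ T, (L.map (fun r => r.2 i - r.1 i)).sum < 0

/-- A nonempty set of species is self-replicable if some finite sequence of
reactions (with repetitions allowed) strictly increases every one of its
coordinates. -/
def SelfReplicable (G : RN ι) (T : Set ι) : Prop :=
  T.Nonempty ∧ T ⊆ ↑G.species ∧
    ∃ L : List ((ι → ℝ) × (ι → ℝ)), (∀ r ∈ L, r ∈ G.reactions) ∧
      ∀ i ∈ T, 0 < (L.map (fun r => r.2 i - r.1 i)).sum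

/-- A P-semiflow: a nonzero nonnegative vector supported on the species with
ωᵀN = 0, i.e. ω · (y' - y) = 0 for every reaction y → y'. -/
def IsPSemiflow (G : RN ι) (ω : ι → ℝ) : Prop :=
  (∀ i, 0 ≤ ω i) ∧ (∀ i, ω i ≠ 0 → i ∈ G.species) ∧ ω ≠ 0 ∧
    ∀ r ∈ G.reactions, ∑ i ∈ G.species, ω i * (r.2 i - r.1 i) = 0

/-- The siphon/P-semiflow property: every siphon contains the support of a
P-semiflow. -/
def SiphonPSemiflowProperty (G : RN ι) : Prop :=
  ∀ T : Set ι, G.IsSiphon T → ∃ ω : ι → ℝ, G.IsPSemiflow ω ∧ {i | 0 < ω i} ⊆ T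

/-- Consistency: there is a strictly positive T-semiflow, i.e. strictly
positive reaction weights v with N v = 0. -/
def Consistent (G : RN ι) : Prop :=
  ∃ v : ((ι → ℝ) × (ι → ℝ)) → ℝ, (∀ r ∈ G.reactions, 0 < v r) ∧
    ∀ i : ι, ∑ r ∈ G.reactions, v r * (r.2 i - r.1 i) = 0

/-- Conservativity: there is a strictly positive conservation law ω ≫ 0 with
ωᵀN = 0. -/
def Conservative (G : RN ι) : Prop :=
  ∃ ω : ι → ℝ, (∀ i ∈ G.species, 0 < ω i) ∧
    ∀ r ∈ G.reactions, ∑ i ∈ G.species, ω i * (r.2 i - r.1 i) = 0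

/-- A directed reaction path from `y` to `y'` all of whose non-endpoint
complexes lie in the set `A`. -/
def PathThrough (G : RN ι) (A : Set (ι → ℝ)) (y y' : ι → ℝ) : Prop :=
  ∃ L : List (ι → ℝ), (∀ z ∈ L, z ∈ A) ∧
    List.Chain (fun a b => (a, b) ∈ G.reactions) y (L ++ [y'])

end RN

variable {ι : Type}

/-- The complex consisting of the single species `j` (with unit coefficient),
for `j` in the given set. -/
def InterCplx [DecidableEq ι] (Y : Finset ι) (z : ι → ℝ) : Prop :=
  ∃ j ∈ Y, z = Pi.single j 1

/-- The complex `z` is supported off the set `Y`. -/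
def OffSet (Y : Finset ι) (z : ι → ℝ) : Prop := ∀ j ∈ Y, z j = 0

namespace RN

/-- `Y` is a set of intermediate species of `G`: (I1) every complex is either
supported off `Y` or equals a single species of `Y` with unit coefficient;
(I2) every `Y`-complex is connected to non-intermediate complexes by directed
reaction paths, in both directions, all of whose non-endpoints are
intermediates. -/
def IsIntermediateSet [DecidableEq ι] (G : RN ι) (Y : Finset ι) : Prop :=
  Y.Nonempty ∧ Y ⊆ G.species ∧
    (∀ y ∈ G.complexes, OffSet Y y ∨ InterCplx Y y) ∧
    (∀ j ∈ Y, ∃ y ∈ G.complexes, ∃ y' ∈ G.complexes, OffSet Y y ∧ OffSet Y y' ∧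
      G.PathThrough {z | InterCplx Y z} y (Pi.single j 1) ∧
      G.PathThrough {z | InterCplx Y z} (Pi.single j 1) y')

/-- `G'` is the reduction of `G` by removal of the set of intermediates `Y`:
its reactions are exactly the pairs `y → y'` of distinct non-intermediate
complexes of `G` joined by a directed reaction path all of whose non-endpoints
are intermediates (in particular all reactions of `G` between non-intermediate
complexes). -/
def IsIntermediateReduction [DecidableEq ι] (G : RN ι) (Y : Finset ι) (G' : RN ι) : Prop :=
  ∀ p : (ι → ℝ) × (ι → ℝ), p ∈ G'.reactions ↔
    (p.1 ∈ G.complexes ∧ p.2 ∈ G.complexes ∧ OffSet Y p.1 ∧ OffSet Y p.2 ∧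
      p.1 ≠ p.2 ∧ G.PathThrough {z | InterCplx Y z} p.1 p.2)

end RN

/-- The projection of a complex onto the coordinates outside `E` (the
coordinates in `E` are set to zero). -/
def projOff [DecidableEq ι] (E : Finset ι) (y : ι → ℝ) : ι → ℝ :=
  fun i => if i ∈ E then 0 else y i

namespace RN

/-- `E` is a set of catalysts of `G`, with `GE` the subnetwork of `G` implied
by `E`: (C1) every reaction either leaves the `E`-coordinates untouched or is
supported entirely in `E`; `GE` consists of the reactions of `G` involving
only species of `E`; and (C2) `GE` has no drainable and no self-replicable
siphons. -/
def IsCatalystSet (G GE : RN ι) (E : Finset ι) : Prop :=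
  E.Nonempty ∧ E ⊆ G.species ∧
    (∀ r ∈ G.reactions, (∀ i ∈ E, r.1 i = r.2 i) ∨ (∀ i, i ∉ E → r.1 i = 0 ∧ r.2 i = 0)) ∧
    (∀ p : (ι → ℝ) × (ι → ℝ), p ∈ GE.reactions ↔
      (p ∈ G.reactions ∧ (∀ i, p.1 i ≠ 0 → i ∈ E) ∧ (∀ i, p.2 i ≠ 0 → i ∈ E))) ∧
    (∀ T : Set ι, GE.IsSiphon T → ¬ GE.Drainable T ∧ ¬ GE.SelfReplicable T)

/-- `G'` is the reduction of `G` by removal of the set of catalysts `E`: its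
reactions are the projections off `E` of those reactions of `G` at least one
of whose projected sides is nonzero. -/
def IsCatalystReduction [DecidableEq ι] (G : RN ι) (E : Finset ι) (G' : RN ι) : Prop :=
  ∀ p : (ι → ℝ) × (ι → ℝ), p ∈ G'.reactions ↔
    ∃ r ∈ G.reactions, p = (projOff E r.1, projOff E r.2) ∧
      (projOff E r.1 ≠ 0 ∨ projOff E r.2 ≠ 0)

/-- A monomolecular network: every complex is either zero or a single species
with unit coefficient. -/
def Monomolecular [DecidableEq ι] (G : RN ι) : Prop :=
  ∀ y ∈ G.complexes, y = 0 ∨ ∃ i ∈ G.species, y = Pi.single i 1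

end RN

/-! Read a multiset of reactions as a flow on complexes. Since an intermediate complex is a
single species `Y_k`, the net change at `Y_k` is the inflow minus the outflow at `Y_k`.

Given a siphon `T` of `G` and reactions whose net change has sign `ε` on `T`, eliminate the
intermediates one at a time: splice each reaction into `Y_k` with one out of `Y_k`; what is left is
only inflow or only outflow. Inflow is redirected to an exit complex of `Y_k`, and outflow either
starts from an entry complex (`ε < 0`) or is dropped (`ε > 0`). When this could hurt, the sign of
the net change at `Y_k` forces `k ∉ T`, and then, `T` being a siphon, the exit complex and the
dropped products miss `T`. So `T \ Y` is a siphon of `G*` with the same property.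

Conversely, reactions of `G*` lift to paths in `G` with the same net change, which vanishes on
`Y`; adding paths into (or out of) every intermediate and taking many copies of the lift gives
the sign `ε` on `T ∪ Y`, and on the siphon of `G` obtained from `T` by adding the intermediates
that lead to `T`. -/

open Filter

def netChange : Multiset ((ι → ℝ) × (ι → ℝ)) →+ (ι → ℝ) where
  toFun M := (M.map fun r => r.2 - r.1).sum
  map_zero' := by simp
  map_add' := by simp

@[simp]
theorem netChange_singleton (r : (ι → ℝ) × (ι → ℝ)) : netChange {r} = r.2 - r.1 := by
  simp [netChange]

@[simp]
theorem netChange_cons (r : (ι → ℝ) × (ι → ℝ)) (M : Multiset ((ι → ℝ) × (ι → ℝ))) :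
    netChange (r ::ₘ M) = r.2 - r.1 + netChange M := by
  rw [← Multiset.singleton_add, map_add, netChange_singleton]

theorem netChange_apply (M : Multiset ((ι → ℝ) × (ι → ℝ))) (i : ι) :
    netChange M i = (M.map fun r => r.2 i - r.1 i).sum := by
  simp [netChange, Pi.multiset_sum_apply, Multiset.map_map]

theorem netChange_coe (L : List ((ι → ℝ) × (ι → ℝ))) (i : ι) :
    netChange (L : Multiset _) i = (L.map fun r => r.2 i - r.1 i).sum := by
  rw [netChange_apply, Multiset.map_coe, Multiset.sum_coe]

theorem netChange_apply_eq_zero {M : Multiset ((ι → ℝ) × (ι → ℝ))} {i : ι}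
    (h : ∀ r ∈ M, r.1 i = 0 ∧ r.2 i = 0) : netChange M i = 0 := by
  rw [netChange_apply]
  exact Multiset.sum_eq_zero fun x hx => by
    obtain ⟨r, hr, rfl⟩ := Multiset.mem_map.1 hx
    simp [h r hr]

theorem netChange_map {M : Multiset ((ι → ℝ) × (ι → ℝ))}
    (f : (ι → ℝ) × (ι → ℝ) → (ι → ℝ) × (ι → ℝ)) (d : ι → ℝ)
    (h : ∀ r ∈ M, (f r).2 - (f r).1 = r.2 - r.1 + d) :
    netChange (M.map f) = netChange M + M.card • d := by
  induction M using Multiset.induction_on with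
  | empty => simp
  | cons r M ih =>
    rw [Multiset.map_cons, netChange_cons, netChange_cons, h r (by simp),
      ih fun r hr => h r (by simp [hr]), Multiset.card_cons, succ_nsmul]
    abel

theorem netChange_filter {p : (ι → ℝ) × (ι → ℝ) → Prop} [DecidablePred p]
    {M : Multiset ((ι → ℝ) × (ι → ℝ))} (h : ∀ e ∈ M, ¬p e → e.1 = e.2) :
    netChange (M.filter p) = netChange M := by
  conv_rhs => rw [← Multiset.filter_add_not p M]
  rw [map_add, left_eq_add]
  refine Multiset.sum_eq_zero fun x hx => ?_
  obtain ⟨e, he, rfl⟩ := Multiset.mem_map.1 hx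
  obtain ⟨heM, hpe⟩ := Multiset.mem_filter.1 he
  rw [h e heM hpe, sub_self]

theorem exists_nat_forall_pos {T : Set ι} (hT : T.Finite) {a b : ι → ℝ}
    (h : ∀ i ∈ T, 0 < a i ∨ a i = 0 ∧ 0 < b i) : ∃ N : ℕ, ∀ i ∈ T, 0 < N * a i + b i := by
  refine (((eventually_all_finite hT).2 fun i hi => ?_ :
    ∀ᶠ N : ℕ in atTop, ∀ i ∈ T, 0 < N * a i + b i)).exists
  rcases h i hi with ha | ⟨ha, hb⟩
  · exact (tendsto_atTop_add_const_right _ _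
      (tendsto_natCast_atTop_atTop.atTop_mul_const ha)).eventually_gt_atTop 0
  · exact .of_forall fun N => by simpa [ha] using hb

namespace RN

/-- For `ε = -1` this is drainability of `T`, for `ε = 1` self-replicability. -/
def Replicable (G : RN ι) (ε : ℝ) (T : Set ι) : Prop :=
  ∃ M : Multiset ((ι → ℝ) × (ι → ℝ)), (∀ r ∈ M, r ∈ G.reactions) ∧
    ∀ i ∈ T, 0 < ε * netChange M i

variable {G : RN ι} {A : Set (ι → ℝ)} {T : Set ι} {ε : ℝ}

theorem Replicable.mono {S : Set ι} (h : G.Replicable ε T) (hST : S ⊆ T) : G.Replicable ε S :=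
  let ⟨M, hM, hpos⟩ := h
  ⟨M, hM, fun i hi => hpos i (hST hi)⟩

theorem Replicable.subset_species (h : G.Replicable ε T) : T ⊆ G.species := by
  obtain ⟨M, hM, hpos⟩ := h
  intro i hi
  by_contra hsp
  have : netChange M i = 0 := netChange_apply_eq_zero fun r hr =>
    ⟨by_contra fun h => hsp (G.complexes_supp _ (G.react_mem_fst r (hM r hr)) i h),
      by_contra fun h => hsp (G.complexes_supp _ (G.react_mem_snd r (hM r hr)) i h)⟩
  simpa [this] using hpos i hi

theorem IsSiphon.drainable_iff (hT : G.IsSiphon T) : G.Drainable T ↔ G.Replicable (-1) T := by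
  constructor
  · rintro ⟨-, -, L, hL, hneg⟩
    exact ⟨L, hL, fun i hi => by linarith [hneg i hi, netChange_coe L i]⟩
  · rintro ⟨M, hM, hpos⟩
    refine ⟨hT.1, hT.2.1, M.toList, fun r hr => hM r (Multiset.mem_toList.1 hr), fun i hi => ?_⟩
    have h := netChange_coe M.toList i
    rw [Multiset.coe_toList] at h
    linarith [hpos i hi]

theorem IsSiphon.selfReplicable_iff (hT : G.IsSiphon T) :
    G.SelfReplicable T ↔ G.Replicable 1 T := by
  constructor
  · rintro ⟨-, -, L, hL, hpos⟩
    exact ⟨L, hL, fun i hi => by linarith [hpos i hi, netChange_coe L i]⟩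
  · rintro ⟨M, hM, hpos⟩
    refine ⟨hT.1, hT.2.1, M.toList, fun r hr => hM r (Multiset.mem_toList.1 hr), fun i hi => ?_⟩
    have h := netChange_coe M.toList i
    rw [Multiset.coe_toList] at h
    linarith [hpos i hi]

theorem PathThrough.of_mem {r : (ι → ℝ) × (ι → ℝ)} (hr : r ∈ G.reactions) :
    G.PathThrough A r.1 r.2 :=
  ⟨[], by simp, List.isChain_pair.2 hr⟩

theorem PathThrough.trans {a b z : ι → ℝ} (h₁ : G.PathThrough A a z) (hz : z ∈ A)
    (h₂ : G.PathThrough A z b) : G.PathThrough A a b := by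
  obtain ⟨L₁, hL₁, c₁⟩ := h₁
  obtain ⟨L₂, hL₂, c₂⟩ := h₂
  refine ⟨L₁ ++ z :: L₂, ?_, ?_⟩
  · simp only [List.mem_append, List.mem_cons]
    rintro x (hx | rfl | hx)
    exacts [hL₁ x hx, hz, hL₂ x hx]
  · show List.IsChain _ (a :: (L₁ ++ z :: L₂ ++ [b]))
    rw [List.append_assoc, List.cons_append, List.isChain_cons_split]
    exact ⟨c₁, c₂⟩

@[elab_as_elim]
theorem PathThrough.head_induction_on {motive : (ι → ℝ) → Prop} {a b : ι → ℝ}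
    (h : G.PathThrough A a b) (base : ∀ a, (a, b) ∈ G.reactions → motive a)
    (step : ∀ a c, (a, c) ∈ G.reactions → c ∈ A → motive c → motive a) : motive a := by
  obtain ⟨L, hL, hc⟩ := h
  induction L generalizing a with
  | nil => exact base a (List.isChain_pair.1 hc)
  | cons c L ih =>
    obtain ⟨hac, hc⟩ := List.isChain_cons_cons.1 hc
    exact step a c hac (hL c (by simp)) (ih (fun z hz => hL z (by simp [hz])) hc)

theorem PathThrough.fst_mem {a b : ι → ℝ} (h : G.PathThrough A a b) : a ∈ G.complexes :=
  h.head_induction_on (fun _ hab => G.react_mem_fst _ hab) fun _ _ hac _ _ =>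
    G.react_mem_fst _ hac

theorem PathThrough.snd_mem {a b : ι → ℝ} (h : G.PathThrough A a b) : b ∈ G.complexes :=
  h.head_induction_on (motive := fun _ => b ∈ G.complexes) (fun _ hab => G.react_mem_snd _ hab)
    fun _ _ _ _ hb => hb

theorem PathThrough.exists_netChange_eq {a b : ι → ℝ} (h : G.PathThrough A a b) :
    ∃ K, (∀ r ∈ K, r ∈ G.reactions) ∧ netChange K = b - a := by
  refine h.head_induction_on (fun a hab => ⟨{(a, b)}, by simpa using hab, by simp⟩) ?_
  rintro a c hac - ⟨K, hK, hKc⟩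
  exact ⟨(a, c) ::ₘ K, Multiset.forall_mem_cons.2 ⟨hac, hK⟩, by simp [hKc]⟩

theorem IsSiphon.exists_pos_of_pathThrough {a b : ι → ℝ} (hT : G.IsSiphon T)
    (h : G.PathThrough A a b) (hb : ∃ i ∈ T, 0 < b i) : ∃ i ∈ T, 0 < a i :=
  h.head_induction_on (fun _ hab => hT.2.2 _ hab hb) fun _ _ hac _ hc => hT.2.2 _ hac hc

theorem exists_splice {z : ι → ℝ} (hz : z ∈ A) (P : (ι → ℝ) → Prop)
    (M : Multiset ((ι → ℝ) × (ι → ℝ))) (hM : ∀ e ∈ M, G.PathThrough A e.1 e.2 ∧ P e.1 ∧ P e.2) :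
    ∃ M', (∀ e ∈ M', G.PathThrough A e.1 e.2 ∧ P e.1 ∧ P e.2) ∧ netChange M' = netChange M ∧
      ((∀ e ∈ M', e.1 ≠ z) ∨ ∀ e ∈ M', e.2 ≠ z) := by
  induction hn : M.card using Nat.strong_induction_on generalizing M with
  | _ n ih =>
  by_cases hloop : (z, z) ∈ M
  · obtain ⟨R, rfl⟩ := Multiset.exists_cons_of_mem hloop
    obtain ⟨M', hM', hnc, hdich⟩ :=
      ih R.card (by simp [← hn]) R (fun e he => hM e (Multiset.mem_cons_of_mem he)) rfl
    exact ⟨M', hM', by simp [hnc], hdich⟩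
  by_cases hsplice : (∃ e ∈ M, e.2 = z) ∧ ∃ e ∈ M, e.1 = z
  · obtain ⟨⟨e, he, he₂⟩, e', he', he'₁⟩ := hsplice
    have hne : e' ≠ e := by
      rintro rfl
      exact hloop ((Prod.ext he'₁ he₂ : e' = (z, z)) ▸ he)
    obtain ⟨M₁, rfl⟩ := Multiset.exists_cons_of_mem he
    obtain ⟨R, rfl⟩ := Multiset.exists_cons_of_mem ((Multiset.mem_cons.1 he').resolve_left hne)
    obtain ⟨hp, h₁, -⟩ := hM e (by simp)
    obtain ⟨hp', -, h₂'⟩ := hM e' (by simp)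
    rw [he₂] at hp
    rw [he'₁] at hp'
    obtain ⟨M', hM', hnc, hdich⟩ := ih ((e.1, e'.2) ::ₘ R).card (by simp [← hn])
      ((e.1, e'.2) ::ₘ R) (Multiset.forall_mem_cons.2
        ⟨⟨hp.trans hz hp', h₁, h₂'⟩, fun x hx => hM x (by simp [hx])⟩) rfl
    refine ⟨M', hM', ?_, hdich⟩
    rw [hnc, netChange_cons, netChange_cons, netChange_cons, he₂, he'₁]
    abel
  · refine ⟨M, hM, rfl, ?_⟩
    by_contra! h
    exact hsplice ⟨h.2, h.1⟩

end RN

section Intermediate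

variable [DecidableEq ι] {G G' : RN ι} {Y s : Finset ι} {T : Set ι} {ε : ℝ} {k : ι}
  {M : Multiset ((ι → ℝ) × (ι → ℝ))}

theorem eq_of_single_one_pos {i j : ι} (h : 0 < (Pi.single j 1 : ι → ℝ) i) : i = j := by
  by_contra hij
  simp [Pi.single_eq_of_ne hij] at h

namespace RN

/-- The stage of the elimination at which the intermediates of `s` are gone: once `s = Y` and
loops are dropped, these pairs are reactions of the reduction. -/
def DetoursOff (G : RN ι) (Y s : Finset ι) (M : Multiset ((ι → ℝ) × (ι → ℝ))) : Prop :=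
  ∀ e ∈ M, G.PathThrough {z | InterCplx Y z} e.1 e.2 ∧ OffSet s e.1 ∧ OffSet s e.2

theorem IsIntermediateSet.apply_eq_zero_of_ne_single (hY : G.IsIntermediateSet Y)
    {y : ι → ℝ} (hy : y ∈ G.complexes) (hk : k ∈ Y) (hne : y ≠ Pi.single k 1) : y k = 0 := by
  rcases hY.2.2.1 y hy with hoff | ⟨j, -, rfl⟩
  · exact hoff k hk
  · exact Pi.single_eq_of_ne (fun hkj => hne (by rw [hkj])) 1

theorem IsIntermediateSet.offSet_insert (hY : G.IsIntermediateSet Y) {y : ι → ℝ}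
    (hy : y ∈ G.complexes) (hk : k ∈ Y) (hys : OffSet s y) (hne : y ≠ Pi.single k 1) :
    OffSet (insert k s) y :=
  Finset.forall_mem_insert _ _ _ |>.2 ⟨hY.apply_eq_zero_of_ne_single hy hk hne, hys⟩

theorem IsIntermediateSet.netChange_apply_nonneg (hY : G.IsIntermediateSet Y) (hk : k ∈ Y)
    (hM : G.DetoursOff Y s M) (hout : ∀ e ∈ M, e.1 ≠ Pi.single k 1) : 0 ≤ netChange M k := by
  rw [netChange_apply]
  refine Multiset.sum_nonneg fun x hx => ?_
  obtain ⟨e, he, rfl⟩ := Multiset.mem_map.1 hx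
  have hp := (hM e he).1
  rw [hY.apply_eq_zero_of_ne_single hp.fst_mem hk (hout e he), sub_zero]
  exact G.complexes_nonneg _ hp.snd_mem k

theorem IsIntermediateSet.netChange_apply_nonpos (hY : G.IsIntermediateSet Y) (hk : k ∈ Y)
    (hM : G.DetoursOff Y s M) (hin : ∀ e ∈ M, e.2 ≠ Pi.single k 1) : netChange M k ≤ 0 := by
  rw [netChange_apply]
  refine (Multiset.sum_le_card_nsmul _ 0 fun x hx => ?_).trans_eq (smul_zero _)
  obtain ⟨e, he, rfl⟩ := Multiset.mem_map.1 hx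
  have hp := (hM e he).1
  rw [hY.apply_eq_zero_of_ne_single hp.snd_mem hk (hin e he), zero_sub, neg_nonpos]
  exact G.complexes_nonneg _ hp.fst_mem k

theorem IsSiphon.apply_eq_zero_of_pathThrough {A : Set (ι → ℝ)} (hT : G.IsSiphon T)
    (hk : k ∉ T) {b : ι → ℝ} (h : G.PathThrough A (Pi.single k 1) b) {i : ι} (hi : i ∈ T) :
    b i = 0 := by
  by_contra hbi
  obtain ⟨j, hj, hpos⟩ := hT.exists_pos_of_pathThrough h
    ⟨i, hi, (G.complexes_nonneg b h.snd_mem i).lt_of_ne (Ne.symm hbi)⟩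
  exact hk (eq_of_single_one_pos hpos ▸ hj)

theorem DetoursOff.exists_redirect_inflow (hY : G.IsIntermediateSet Y) (hk : k ∈ Y) (hs : s ⊆ Y)
    (hM : G.DetoursOff Y s M) (hout : ∀ e ∈ M, e.1 ≠ Pi.single k 1) {w : ι → ℝ}
    (hw : OffSet Y w) (hkw : G.PathThrough {z | InterCplx Y z} (Pi.single k 1) w) :
    ∃ M', G.DetoursOff Y (insert k s) M' ∧
      ∃ n : ℕ, netChange M' = netChange M + n • (w - Pi.single k 1) := by
  classical
  set I := M.filter (·.2 = Pi.single k 1)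
  have hwk : OffSet (insert k s) w := fun j hj => hw j (Finset.insert_subset hk hs hj)
  refine ⟨I.map (fun e => (e.1, w)) + M.filter (·.2 ≠ Pi.single k 1), ?_, I.card, ?_⟩
  · intro e he
    rcases Multiset.mem_add.1 he with he | he
    · obtain ⟨e, heI, rfl⟩ := Multiset.mem_map.1 he
      obtain ⟨heM, he₂⟩ := Multiset.mem_filter.1 heI
      obtain ⟨hp, h₁, -⟩ := hM e heM
      rw [he₂] at hp
      exact ⟨hp.trans ⟨k, hk, rfl⟩ hkw, hY.offSet_insert hp.fst_mem hk h₁ (hout e heM), hwk⟩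
    · obtain ⟨heM, he₂⟩ := Multiset.mem_filter.1 he
      obtain ⟨hp, h₁, h₂⟩ := hM e heM
      exact ⟨hp, hY.offSet_insert hp.fst_mem hk h₁ (hout e heM),
        hY.offSet_insert hp.snd_mem hk h₂ he₂⟩
  · rw [map_add, netChange_map _ (w - Pi.single k 1), add_right_comm, ← map_add,
      Multiset.filter_add_not]
    intro e he
    rw [(Multiset.mem_filter.1 he).2]
    abel

theorem DetoursOff.exists_redirect_outflow (hY : G.IsIntermediateSet Y) (hk : k ∈ Y) (hs : s ⊆ Y)
    (hM : G.DetoursOff Y s M) (hin : ∀ e ∈ M, e.2 ≠ Pi.single k 1) {u : ι → ℝ}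
    (hu : OffSet Y u) (huk : G.PathThrough {z | InterCplx Y z} u (Pi.single k 1)) :
    ∃ M', G.DetoursOff Y (insert k s) M' ∧
      ∃ n : ℕ, netChange M' = netChange M + n • (Pi.single k 1 - u) := by
  classical
  set O := M.filter (·.1 = Pi.single k 1)
  have huk' : OffSet (insert k s) u := fun j hj => hu j (Finset.insert_subset hk hs hj)
  refine ⟨O.map (fun e => (u, e.2)) + M.filter (·.1 ≠ Pi.single k 1), ?_, O.card, ?_⟩
  · intro e he
    rcases Multiset.mem_add.1 he with he | he
    · obtain ⟨e, heO, rfl⟩ := Multiset.mem_map.1 he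
      obtain ⟨heM, he₁⟩ := Multiset.mem_filter.1 heO
      obtain ⟨hp, -, h₂⟩ := hM e heM
      rw [he₁] at hp
      exact ⟨huk.trans ⟨k, hk, rfl⟩ hp, huk', hY.offSet_insert hp.snd_mem hk h₂ (hin e heM)⟩
    · obtain ⟨heM, he₁⟩ := Multiset.mem_filter.1 he
      obtain ⟨hp, h₁, h₂⟩ := hM e heM
      exact ⟨hp, hY.offSet_insert hp.fst_mem hk h₁ he₁,
        hY.offSet_insert hp.snd_mem hk h₂ (hin e heM)⟩
  · rw [map_add, netChange_map _ (Pi.single k 1 - u), add_right_comm, ← map_add,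
      Multiset.filter_add_not]
    intro e he
    rw [(Multiset.mem_filter.1 he).2]
    abel

theorem DetoursOff.exists_drop_outflow (hY : G.IsIntermediateSet Y) (hT : G.IsSiphon T)
    (hkT : k ∉ T) (hk : k ∈ Y) (hM : G.DetoursOff Y s M) (hin : ∀ e ∈ M, e.2 ≠ Pi.single k 1) :
    ∃ M', G.DetoursOff Y (insert k s) M' ∧ ∀ i ∈ T, netChange M' i = netChange M i := by
  classical
  refine ⟨M.filter (·.1 ≠ Pi.single k 1), fun e he => ?_, fun i hi => ?_⟩
  · obtain ⟨heM, he₁⟩ := Multiset.mem_filter.1 he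
    obtain ⟨hp, h₁, h₂⟩ := hM e heM
    exact ⟨hp, hY.offSet_insert hp.fst_mem hk h₁ he₁,
      hY.offSet_insert hp.snd_mem hk h₂ (hin e heM)⟩
  · conv_rhs => rw [← Multiset.filter_add_not (·.1 ≠ Pi.single k 1) M]
    rw [map_add, Pi.add_apply, left_eq_add]
    refine netChange_apply_eq_zero fun e he => ?_
    obtain ⟨heM, he₁⟩ := Multiset.mem_filter.1 he
    rw [not_not] at he₁
    have hp := (hM e heM).1
    rw [he₁] at hp ⊢
    exact ⟨Pi.single_eq_of_ne (ne_of_mem_of_not_mem hi hkT) 1,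
      hT.apply_eq_zero_of_pathThrough hkT hp hi⟩

theorem DetoursOff.exists_eliminate (hY : G.IsIntermediateSet Y) (hT : G.IsSiphon T)
    (hε : ε ≠ 0) (hs : s ⊆ Y) (hk : k ∈ Y) (hM : G.DetoursOff Y s M)
    (hpos : k ∈ T → 0 < ε * netChange M k) :
    ∃ M', G.DetoursOff Y (insert k s) M' ∧
      ∀ i ∈ T, i ≠ k → ε * netChange M i ≤ ε * netChange M' i := by
  obtain ⟨M₂, hM₂, hnc, hdich⟩ :=
    exists_splice (A := {z | InterCplx Y z}) ⟨k, hk, rfl⟩ (OffSet s) M hM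
  replace hM₂ : G.DetoursOff Y s M₂ := hM₂
  rw [← hnc] at hpos ⊢
  obtain ⟨u, -, w, hw, hu, hwY, huk, hkw⟩ := hY.2.2.2 k hk
  rcases hdich with hout | hin
  · have hk₀ := hY.netChange_apply_nonneg hk hM₂ hout
    obtain ⟨M', hM', n, hn⟩ := hM₂.exists_redirect_inflow hY hk hs hout hwY hkw
    refine ⟨M', hM', fun i hi hik => ?_⟩
    have hεw : 0 ≤ ε * w i := by
      rcases hε.lt_or_gt with hε | hε
      · have hkT : k ∉ T := fun hkT => by nlinarith [hpos hkT]
        rw [hT.apply_eq_zero_of_pathThrough hkT hkw hi, mul_zero]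
      · exact mul_nonneg hε.le (G.complexes_nonneg w hw i)
    rw [hn, Pi.add_apply, Pi.smul_apply, Pi.sub_apply, Pi.single_eq_of_ne hik, nsmul_eq_mul]
    nlinarith
  · have hk₀ := hY.netChange_apply_nonpos hk hM₂ hin
    rcases hε.lt_or_gt with hε | hε
    · obtain ⟨M', hM', n, hn⟩ := hM₂.exists_redirect_outflow hY hk hs hin hu huk
      refine ⟨M', hM', fun i hi hik => ?_⟩
      rw [hn, Pi.add_apply, Pi.smul_apply, Pi.sub_apply, Pi.single_eq_of_ne hik, nsmul_eq_mul]
      have hui := G.complexes_nonneg u huk.fst_mem i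
      nlinarith [mul_nonneg (mul_nonneg n.cast_nonneg hui) (neg_nonneg.2 hε.le)]
    · have hkT : k ∉ T := fun hkT => by nlinarith [hpos hkT]
      obtain ⟨M', hM', hnc'⟩ := hM₂.exists_drop_outflow hY hT hkT hk hin
      exact ⟨M', hM', fun i hi _ => by rw [hnc' i hi]⟩

theorem IsIntermediateSet.exists_detoursOff (hY : G.IsIntermediateSet Y) (hT : G.IsSiphon T)
    (hε : ε ≠ 0) {L : Multiset ((ι → ℝ) × (ι → ℝ))} (hL : ∀ r ∈ L, r ∈ G.reactions)
    (hpos : ∀ i ∈ T, 0 < ε * netChange L i) {s : Finset ι} (hs : s ⊆ Y) :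
    ∃ M, G.DetoursOff Y s M ∧ ∀ i ∈ T, i ∉ s → ε * netChange L i ≤ ε * netChange M i := by
  induction s using Finset.induction_on with
  | empty => exact ⟨L, fun e he => ⟨.of_mem (hL e he), by simp [OffSet]⟩, fun _ _ _ => le_rfl⟩
  | insert k s hks ih =>
    obtain ⟨hk, hs⟩ := Finset.insert_subset_iff.1 hs
    obtain ⟨M, hM, hLM⟩ := ih hs
    obtain ⟨M', hM', hMM'⟩ := hM.exists_eliminate hY hT hε hs hk
      fun hkT => (hpos k hkT).trans_le (hLM k hkT hks)
    refine ⟨M', hM', fun i hi his => ?_⟩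
    rw [Finset.mem_insert, not_or] at his
    exact (hLM i hi his.2).trans (hMM' i hi his.1)

theorem Replicable.reduction_sdiff (hY : G.IsIntermediateSet Y)
    (hred : G.IsIntermediateReduction Y G') (hε : ε ≠ 0) (hT : G.IsSiphon T)
    (h : G.Replicable ε T) : G'.Replicable ε (T \ Y) := by
  classical
  obtain ⟨L, hL, hpos⟩ := h
  obtain ⟨M, hM, hLM⟩ := hY.exists_detoursOff hT hε hL hpos subset_rfl
  refine ⟨M.filter fun e => e.1 ≠ e.2, fun e he => ?_, fun i hi => ?_⟩
  · obtain ⟨heM, hne⟩ := Multiset.mem_filter.1 he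
    obtain ⟨hp, h₁, h₂⟩ := hM e heM
    exact (hred e).2 ⟨hp.fst_mem, hp.snd_mem, h₁, h₂, hne, hp⟩
  · rw [netChange_filter fun _ _ => not_not.1]
    exact (hpos i hi.1).trans_le (hLM i hi.1 hi.2)

theorem IsSiphon.reduction_sdiff (hY : G.IsIntermediateSet Y)
    (hred : G.IsIntermediateReduction Y G') (hT : G.IsSiphon T) (hsp : T \ Y ⊆ G'.species) :
    G'.IsSiphon (T \ Y) := by
  refine ⟨?_, hsp, fun r hr ⟨i, hi, hpos⟩ => ?_⟩
  · obtain ⟨i, hi⟩ := hT.1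
    by_cases hiY : i ∈ Y
    · obtain ⟨u, -, -, -, hu, -, hui, -⟩ := hY.2.2.2 i hiY
      obtain ⟨j, hj, hpos⟩ := hT.exists_pos_of_pathThrough hui ⟨i, hi, by simp⟩
      exact ⟨j, hj, fun hjY => hpos.ne' (hu j hjY)⟩
    · exact ⟨i, hi, hiY⟩
  · obtain ⟨-, -, h₁, -, -, hp⟩ := (hred r).1 hr
    obtain ⟨j, hj, hpos⟩ := hT.exists_pos_of_pathThrough hp ⟨i, hi.1, hpos⟩
    exact ⟨j, ⟨hj, fun hjY => hpos.ne' (h₁ j hjY)⟩, hpos⟩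

theorem IsIntermediateReduction.mem_complexes (hred : G.IsIntermediateReduction Y G')
    {z : ι → ℝ} (hz : z ∈ G'.complexes) : z ∈ G.complexes ∧ OffSet Y z := by
  obtain ⟨r, hr, rfl | rfl⟩ := G'.complexes_used z hz
  · obtain ⟨h₁, -, h₃, -⟩ := (hred r).1 hr
    exact ⟨h₁, h₃⟩
  · obtain ⟨-, h₂, -, h₄, -⟩ := (hred r).1 hr
    exact ⟨h₂, h₄⟩

theorem IsIntermediateReduction.mem_species (hred : G.IsIntermediateReduction Y G') {i : ι}
    (hi : i ∈ G'.species) : i ∈ G.species ∧ i ∉ Y := by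
  obtain ⟨z, hz, hzi⟩ := G'.species_used i hi
  obtain ⟨hzG, hzY⟩ := hred.mem_complexes hz
  exact ⟨G.complexes_supp z hzG i hzi, fun hiY => hzi (hzY i hiY)⟩

theorem IsIntermediateReduction.exists_lift (hred : G.IsIntermediateReduction Y G')
    {M : Multiset ((ι → ℝ) × (ι → ℝ))} (hM : ∀ r ∈ M, r ∈ G'.reactions) :
    ∃ K, (∀ r ∈ K, r ∈ G.reactions) ∧ netChange K = netChange M := by
  induction M using Multiset.induction_on with
  | empty => exact ⟨0, by simp, rfl⟩
  | cons r M ih =>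
    rw [Multiset.forall_mem_cons] at hM
    obtain ⟨K, hK, hKM⟩ := ih hM.2
    obtain ⟨-, -, -, -, -, hp⟩ := (hred r).1 hM.1
    obtain ⟨Kr, hKr, hKrr⟩ := hp.exists_netChange_eq
    refine ⟨Kr + K, fun x hx => ?_, by rw [map_add, hKrr, hKM, netChange_cons]⟩
    rcases Multiset.mem_add.1 hx with hx | hx
    exacts [hKr x hx, hK x hx]

theorem IsIntermediateSet.exists_netChange_single (hY : G.IsIntermediateSet Y) (hε : ε ≠ 0)
    {j : ι} (hj : j ∈ Y) : ∃ K, (∀ r ∈ K, r ∈ G.reactions) ∧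
      ∀ m ∈ Y, ε * netChange K m = |ε| * (Pi.single j 1 : ι → ℝ) m := by
  obtain ⟨u, -, w, -, hu, hw, huj, hjw⟩ := hY.2.2.2 j hj
  rcases hε.lt_or_gt with hε | hε
  · obtain ⟨K, hK, hKc⟩ := hjw.exists_netChange_eq
    refine ⟨K, hK, fun m hm => ?_⟩
    rw [hKc, Pi.sub_apply, hw m hm, abs_of_neg hε]
    ring
  · obtain ⟨K, hK, hKc⟩ := huj.exists_netChange_eq
    refine ⟨K, hK, fun m hm => ?_⟩
    rw [hKc, Pi.sub_apply, hu m hm, abs_of_pos hε, sub_zero]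

theorem IsIntermediateSet.exists_netChange_pos (hY : G.IsIntermediateSet Y) (hε : ε ≠ 0) :
    ∃ P, (∀ r ∈ P, r ∈ G.reactions) ∧ ∀ m ∈ Y, 0 < ε * netChange P m := by
  choose! K hK hKY using fun j (hj : j ∈ Y) => hY.exists_netChange_single hε hj
  refine ⟨∑ j ∈ Y, K j, fun r hr => ?_, fun m hm => ?_⟩
  · obtain ⟨j, hj, hr⟩ := Multiset.mem_sum.1 hr
    exact hK j hj r hr
  · rw [map_sum, Finset.sum_apply, Finset.mul_sum, Finset.sum_congr rfl fun j hj => hKY j hj m hm,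
      ← Finset.mul_sum, Finset.sum_pi_single, if_pos hm, mul_one]
    exact abs_pos.2 hε

theorem Replicable.union_of_reduction (hY : G.IsIntermediateSet Y)
    (hred : G.IsIntermediateReduction Y G') (hε : ε ≠ 0) (h : G'.Replicable ε T) :
    G.Replicable ε (T ∪ Y) := by
  have hfin : (T ∪ Y).Finite :=
    (G'.species.finite_toSet.subset h.subset_species).union Y.finite_toSet
  obtain ⟨M, hM, hpos⟩ := h
  obtain ⟨K, hK, hKM⟩ := hred.exists_lift hM
  obtain ⟨P, hP, hPY⟩ := hY.exists_netChange_pos hε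
  -- `K` is neutral on the intermediates, so enough copies of it dominate `P` on `T`
  obtain ⟨N, hN⟩ := exists_nat_forall_pos hfin (a := fun i => ε * netChange K i)
    (b := fun i => ε * netChange P i) fun i hi => by
      rcases hi with hi | hi
      · exact .inl (hKM ▸ hpos i hi)
      · refine .inr ⟨?_, hPY i hi⟩
        rw [hKM, netChange_apply_eq_zero fun r hr => ?_, mul_zero]
        obtain ⟨-, -, h₁, h₂, -⟩ := (hred r).1 (hM r hr)
        exact ⟨h₁ i hi, h₂ i hi⟩
  refine ⟨N • K + P, fun r hr => ?_, fun i hi => ?_⟩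
  · rcases Multiset.mem_add.1 hr with hr | hr
    exacts [hK r (Multiset.mem_of_mem_nsmul hr), hP r hr]
  · convert hN i hi using 1
    rw [map_add, map_nsmul, Pi.add_apply, Pi.smul_apply, nsmul_eq_mul]
    ring

theorem IsSiphon.exists_of_reduction (hY : G.IsIntermediateSet Y)
    (hred : G.IsIntermediateReduction Y G') (hT : G'.IsSiphon T) :
    ∃ S, G.IsSiphon S ∧ T ⊆ S ∧ S ⊆ T ∪ Y := by
  set U : Set ι := {j | j ∈ Y ∧ ∃ w, OffSet Y w ∧
    G.PathThrough {z | InterCplx Y z} (Pi.single j 1) w ∧ ∃ i ∈ T, 0 < w i}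
  have meets_of_path : ∀ a w, OffSet Y w → (∃ i ∈ T, 0 < w i) →
      G.PathThrough {z | InterCplx Y z} a w → ∃ i ∈ T ∪ U, 0 < a i := by
    intro a w hw hwT haw
    rcases hY.2.2.1 a haw.fst_mem with ha | ⟨m, hm, rfl⟩
    · obtain ⟨i, hi, hpos⟩ : ∃ i ∈ T, 0 < a i := by
        by_cases haw' : a = w
        · exact haw' ▸ hwT
        · exact hT.2.2 (a, w) ((hred _).2 ⟨haw.fst_mem, haw.snd_mem, ha, hw, haw', haw⟩) hwT
      exact ⟨i, .inl hi, hpos⟩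
    · exact ⟨m, .inr ⟨hm, w, hw, haw, hwT⟩, by simp⟩
  refine ⟨T ∪ U, ⟨hT.1.mono Set.subset_union_left, ?_, ?_⟩, Set.subset_union_left,
    Set.union_subset_union_right _ fun j hj => hj.1⟩
  · exact Set.union_subset (fun i hi => (hred.mem_species (hT.2.1 hi)).1) fun j hj => hY.2.1 hj.1
  · rintro r hr ⟨i, hi, hpos⟩
    have hp : G.PathThrough {z | InterCplx Y z} r.1 r.2 := .of_mem hr
    rcases hY.2.2.1 r.2 (G.react_mem_snd r hr) with hoff | ⟨j, hj, hrj⟩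
    · have hiT : i ∈ T := hi.resolve_right fun hiU => hpos.ne' (hoff i hiU.1)
      exact meets_of_path r.1 r.2 hoff ⟨i, hiT, hpos⟩ hp
    · rw [hrj] at hpos hp
      obtain rfl := eq_of_single_one_pos hpos
      obtain ⟨-, w, hw, hiw, hwT⟩ :=
        hi.resolve_left fun hiT => (hred.mem_species (hT.2.1 hiT)).2 hj
      exact meets_of_path r.1 w hw hwT (hp.trans ⟨i, hj, rfl⟩ hiw)

theorem forall_isSiphon_not_replicable_iff (hY : G.IsIntermediateSet Y)
    (hred : G.IsIntermediateReduction Y G') (hε : ε ≠ 0) :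
    (∀ T, G.IsSiphon T → ¬G.Replicable ε T) ↔ ∀ T, G'.IsSiphon T → ¬G'.Replicable ε T := by
  constructor
  · intro h T hT hrep
    obtain ⟨S, hS, hTS, hST⟩ := hT.exists_of_reduction hY hred
    exact h S hS ((hrep.union_of_reduction hY hred hε).mono hST)
  · intro h T hT hrep
    have hrep' := hrep.reduction_sdiff hY hred hε hT
    exact h _ (hT.reduction_sdiff hY hred hrep'.subset_species) hrep'

end RN

end Intermediate

/-- Theorem 1(i): if `G'` is obtained from `G` by removal of a set of
intermediates `Y`, then `G` has no drainable (respectively, self-replicable)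
siphons if and only if `G'` has no drainable (respectively, self-replicable)
siphons. -/
theorem no_drainable_selfReplicable_siphons_iff_of_intermediate_removal
    {ι : Type} [DecidableEq ι] (G G' : RN ι) (Y : Finset ι)
    (hY : G.IsIntermediateSet Y) (hred : G.IsIntermediateReduction Y G') :
    ((∀ T : Set ι, G.IsSiphon T → ¬ G.Drainable T) ↔
      (∀ T : Set ι, G'.IsSiphon T → ¬ G'.Drainable T)) ∧
    ((∀ T : Set ι, G.IsSiphon T → ¬ G.SelfReplicable T) ↔
      (∀ T : Set ι, G'.IsSiphon T → ¬ G'.SelfReplicable T)) := by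
  have drain (H : RN ι) : (∀ T, H.IsSiphon T → ¬H.Drainable T) ↔
      ∀ T, H.IsSiphon T → ¬H.Replicable (-1) T :=
    forall₂_congr fun _ hT => not_congr hT.drainable_iff
  have selfRep (H : RN ι) : (∀ T, H.IsSiphon T → ¬H.SelfReplicable T) ↔
      ∀ T, H.IsSiphon T → ¬H.Replicable 1 T :=
    forall₂_congr fun _ hT => not_congr hT.selfReplicable_iff
  rw [drain, drain, selfRep, selfRep]
  exact ⟨RN.forall_isSiphon_not_replicable_iff hY hred (by norm_num),
    RN.forall_isSiphon_not_replicable_iff hY hred one_ne_zero⟩
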